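/- arXiv:1912.12970 — 4 statements merged into one kernel-verified Lean document; each statement's English description precedes it below -/
import Mathlib

section
/- Suppose matrix sequences X_t ∈ R^{n×r}, Λ_t ∈ R^{n×r} satisfy the coupled recursions X_{t+1} = A_t X_t − R_t Λ_{t+1} + M_t and Λ_t = Q_t X_t + A_tᵀ Λ_{t+1} + N_t for t = 0,…,T−1, with terminal condition Λ_T = P_T X_T + W_T for given matrices P_T ∈ R^{n×n}, W_T ∈ R^{n×r}. Define backward recursions P_t = Q_t + A_tᵀ (I + P_{t+1} R_t)^{−1} P_{t+1} A_t and W_t = A_tᵀ (I + P_{t+1} R_t)^{−1} (W_{t+1} + P_{t+1} M_t) + N_t. If I + P_{t+1} R_t is invertible for every t, then Λ_t = P_t X_t + W_t holds for all t = 0,1,…,T. -/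
open Matrix

/-- Sweep lemma: the affine costate-state relation `Λ_t = P_t X_t + W_t`
propagates backward through the coupled recursions via Riccati-type recursions. -/
theorem sweep_lemma (n r T : ℕ)
    (A R Q : ℕ → Matrix (Fin n) (Fin n) ℝ)
    (M N : ℕ → Matrix (Fin n) (Fin r) ℝ)
    (X Λ : ℕ → Matrix (Fin n) (Fin r) ℝ)
    (P : ℕ → Matrix (Fin n) (Fin n) ℝ) (W : ℕ → Matrix (Fin n) (Fin r) ℝ)
    (hX : ∀ t < T, X (t + 1) = A t * X t - R t * Λ (t + 1) + M t)
    (hΛ : ∀ t < T, Λ t = Q t * X t + (A t)ᵀ * Λ (t + 1) + N t)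
    (hterm : Λ T = P T * X T + W T)
    (hinv : ∀ t < T, IsUnit (1 + P (t + 1) * R t))
    (hP : ∀ t < T, P t = Q t + (A t)ᵀ * (1 + P (t + 1) * R t)⁻¹ * (P (t + 1) * A t))
    (hW : ∀ t < T, W t = (A t)ᵀ * (1 + P (t + 1) * R t)⁻¹ * (W (t + 1) + P (t + 1) * M t) + N t) :
    ∀ t ≤ T, Λ t = P t * X t + W t := by
  have key : ∀ d t, t + d = T → Λ t = P t * X t + W t := by
    intro d
    induction d with
    | zero => intro t ht; simpa [← ht] using hterm
    | succ d ih =>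
      intro t ht
      have htT : t < T := by omega
      have ih1 : Λ (t + 1) = P (t + 1) * X (t + 1) + W (t + 1) := ih (t + 1) (by omega)
      have hu' := (Matrix.isUnit_iff_isUnit_det _).mp (hinv t htT)
      have e : Λ (t + 1) = P (t + 1) * (A t * X t - R t * Λ (t + 1) + M t) + W (t + 1) := by
        rw [← hX t htT]; exact ih1
      have h1 : (1 + P (t + 1) * R t) * Λ (t + 1)
          = P (t + 1) * A t * X t + (W (t + 1) + P (t + 1) * M t) := by
        rw [Matrix.add_mul, Matrix.one_mul]
        nth_rewrite 1 [e]
        simp only [Matrix.mul_add, Matrix.mul_sub, Matrix.mul_assoc]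
        abel
      have h2 : Λ (t + 1)
          = (1 + P (t + 1) * R t)⁻¹ * (P (t + 1) * A t * X t + (W (t + 1) + P (t + 1) * M t)) := by
        rw [← h1, ← Matrix.mul_assoc, Matrix.nonsing_inv_mul _ hu', Matrix.one_mul]
      rw [hΛ t htT, hP t htT, hW t htT, h2]
      simp only [Matrix.add_mul, Matrix.mul_add, Matrix.mul_assoc]
      abel
  intro t ht
  exact key (T - t) t (by omega)
end

section
/- Under the hypotheses of the sweep lemma (coupled recursions X_{t+1} = A_t X_t − R_t Λ_{t+1} + M_t, Λ_t = Q_t X_t + A_tᵀ Λ_{t+1} + N_t, terminal condition Λ_T = P_T X_T + W_T, with I + P_{t+1} R_t invertible for all t), the costate at time t+1 is given in feedback form by Λ_{t+1} = (I + P_{t+1} R_t)^{−1} (P_{t+1} A_t X_t + P_{t+1} M_t + W_{t+1}), where P and W satisfy the backward Riccati recursions P_t = Q_t + A_tᵀ(I + P_{t+1}R_t)^{−1}P_{t+1}A_t and W_t = A_tᵀ(I + P_{t+1}R_t)^{−1}(W_{t+1} + P_{t+1}M_t) + N_t. -/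
open Matrix

/-- Under the sweep-lemma hypotheses, the costate is given in feedback form:
`Λ_{t+1} = (I + P_{t+1} R_t)⁻¹ (P_{t+1} A_t X_t + P_{t+1} M_t + W_{t+1})`. -/
theorem costate_feedback_form (n r T : ℕ)
    (A R Q : ℕ → Matrix (Fin n) (Fin n) ℝ)
    (M N : ℕ → Matrix (Fin n) (Fin r) ℝ)
    (X Λ : ℕ → Matrix (Fin n) (Fin r) ℝ)
    (P : ℕ → Matrix (Fin n) (Fin n) ℝ) (W : ℕ → Matrix (Fin n) (Fin r) ℝ)
    (hX : ∀ t < T, X (t + 1) = A t * X t - R t * Λ (t + 1) + M t)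
    (hΛ : ∀ t < T, Λ t = Q t * X t + (A t)ᵀ * Λ (t + 1) + N t)
    (hterm : Λ T = P T * X T + W T)
    (hinv : ∀ t < T, IsUnit (1 + P (t + 1) * R t))
    (hP : ∀ t < T, P t = Q t + (A t)ᵀ * (1 + P (t + 1) * R t)⁻¹ * (P (t + 1) * A t))
    (hW : ∀ t < T, W t = (A t)ᵀ * (1 + P (t + 1) * R t)⁻¹ * (W (t + 1) + P (t + 1) * M t) + N t) :
    ∀ t < T, Λ (t + 1) =
      (1 + P (t + 1) * R t)⁻¹ * (P (t + 1) * (A t * X t) + P (t + 1) * M t + W (t + 1)) := by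
  have fb : ∀ t, t < T → Λ (t + 1) = P (t + 1) * X (t + 1) + W (t + 1) →
      Λ (t + 1) = (1 + P (t + 1) * R t)⁻¹ *
        (P (t + 1) * (A t * X t) + P (t + 1) * M t + W (t + 1)) := by
    intro t ht hnext
    rw [hX t ht] at hnext
    have h1 : (1 + P (t + 1) * R t) * Λ (t + 1) =
        P (t + 1) * (A t * X t) + P (t + 1) * M t + W (t + 1) := by
      calc (1 + P (t + 1) * R t) * Λ (t + 1)
          = Λ (t + 1) + P (t + 1) * (R t * Λ (t + 1)) := by
            rw [Matrix.add_mul, Matrix.one_mul, Matrix.mul_assoc]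
        _ = (P (t + 1) * (A t * X t - R t * Λ (t + 1) + M t) + W (t + 1))
              + P (t + 1) * (R t * Λ (t + 1)) := by rw [← hnext]
        _ = P (t + 1) * (A t * X t) + P (t + 1) * M t + W (t + 1) := by
            rw [Matrix.mul_add, Matrix.mul_sub]; abel
    have hu : IsUnit (1 + P (t + 1) * R t).det :=
      (Matrix.isUnit_iff_isUnit_det _).mp (hinv t ht)
    have h2 : (1 + P (t + 1) * R t)⁻¹ * ((1 + P (t + 1) * R t) * Λ (t + 1)) = Λ (t + 1) := by
      rw [← Matrix.mul_assoc, Matrix.nonsing_inv_mul _ hu, Matrix.one_mul]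
    rw [h1] at h2
    exact h2.symm
  have key : ∀ d s, s + d = T → Λ s = P s * X s + W s := by
    intro d
    induction d with
    | zero =>
      intro s hs
      have : s = T := by omega
      subst this
      exact hterm
    | succ d ih =>
      intro s hs
      have hsT : s < T := by omega
      have hnext : Λ (s + 1) = P (s + 1) * X (s + 1) + W (s + 1) := ih (s + 1) (by omega)
      rw [hΛ s hsT, hP s hsT, hW s hsT, fb s hsT hnext]
      simp only [Matrix.mul_add, Matrix.add_mul, Matrix.mul_assoc]
      abel
  intro t ht
  exact fb t ht (key (T - (t + 1)) (t + 1) (by omega))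
end

section
/- Let Q, A, R, P⁺ ∈ R^{n×n} with Q, P⁺, R symmetric positive semidefinite and I + P⁺R invertible. Then P := Q + Aᵀ(I + P⁺R)^{−1}P⁺A is symmetric positive semidefinite. -/
open Matrix

/-- One step of the Riccati-type backward recursion preserves positive semidefiniteness. -/
theorem riccati_step_posSemidef (n : ℕ)
    (Q A R Pplus : Matrix (Fin n) (Fin n) ℝ)
    (hQ : Q.PosSemidef) (hPplus : Pplus.PosSemidef) (hR : R.PosSemidef)
    (hinv : IsUnit (1 + Pplus * R)) :
    (Q + Aᵀ * (1 + Pplus * R)⁻¹ * (Pplus * A)).PosSemidef := by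
  set S := (open scoped MatrixOrder in CFC.sqrt Pplus) with hSdef
  have hS : S.PosSemidef := (open scoped MatrixOrder in (CFC.sqrt_nonneg Pplus).posSemidef)
  have hSS : S * S = Pplus := (open scoped MatrixOrder in CFC.sqrt_mul_sqrt_self Pplus hPplus.nonneg)
  have hSH : Sᴴ = S := hS.isHermitian.eq
  -- T = 1 + S R S is positive definite
  have hSRS : (S * R * S).PosSemidef := by
    have := hR.mul_mul_conjTranspose_same S
    rwa [hSH] at this
  have hT : (1 + S * R * S).PosDef := Matrix.PosDef.add_posSemidef Matrix.PosDef.one hSRS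
  set T := 1 + S * R * S with hTdef
  -- key identity: (1 + Pplus R) S = S T
  have hkey : (1 + Pplus * R) * S = S * T := by
    rw [hTdef, ← hSS]; noncomm_ring
  -- hence (1 + Pplus R)⁻¹ S = S T⁻¹
  have hdet : IsUnit (1 + Pplus * R).det := (Matrix.isUnit_iff_isUnit_det _).mp hinv
  have hinv2 : (1 + Pplus * R)⁻¹ * S = S * T⁻¹ := by
    have h1 : (1 + Pplus * R)⁻¹ * ((1 + Pplus * R) * S) * T⁻¹ = S * T⁻¹ := by
      rw [← Matrix.mul_assoc, Matrix.nonsing_inv_mul _ hdet, Matrix.one_mul]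
    rw [hkey, Matrix.mul_assoc, Matrix.mul_assoc, Matrix.mul_nonsing_inv _
      ((Matrix.isUnit_iff_isUnit_det _).mp hT.isUnit), Matrix.mul_one] at h1
    exact h1
  have hrw : Aᵀ * (1 + Pplus * R)⁻¹ * (Pplus * A) = (S * A)ᴴ * T⁻¹ * (S * A) := by
    rw [conjTranspose_mul, hSH]
    calc Aᵀ * (1 + Pplus * R)⁻¹ * (Pplus * A)
        = Aᵀ * ((1 + Pplus * R)⁻¹ * S) * (S * A) := by rw [← hSS]; noncomm_ring
      _ = Aᵀ * (S * T⁻¹) * (S * A) := by rw [hinv2]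
      _ = Aᴴ * S * T⁻¹ * (S * A) := by rw [Matrix.conjTranspose_eq_transpose_of_trivial]; noncomm_ring
  rw [hrw]
  exact hQ.add (hT.inv.posSemidef.conjTranspose_mul_mul_same (S * A))
end

section
/- For the finite-horizon matrix LQR with strictly convex control costs: if H^{xx}_t − H^{xu}_t (H^{uu}_t)^{−1} H^{ux}_t ⪰ 0 and H^{uu}_t ≻ 0 for all t = 0,…,T−1, and H^{xx}_T ⪰ 0, then the backward Riccati recursion P_t = Q_t + A_tᵀ(I + P_{t+1}R_t)^{−1}P_{t+1}A_t with P_T = H^{xx}_T, Q_t = H^{xx}_t − H^{xu}_t(H^{uu}_t)^{−1}H^{ux}_t, A_t = F_t − G_t(H^{uu}_t)^{−1}H^{ux}_t, R_t = G_t(H^{uu}_t)^{−1}G_tᵀ, is well defined for all t (i.e., I + P_{t+1}R_t is invertible at every step) and every P_t is symmetric positive semidefinite. -/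
open Matrix

section Aux
variable {n : ℕ}

lemma riccati_step {P R : Matrix (Fin n) (Fin n) ℝ}
    (hP : P.PosSemidef) (hR : R.PosSemidef) :
    IsUnit (1 + P * R) ∧
    ∀ A : Matrix (Fin n) (Fin n) ℝ, (Aᵀ * (1 + P * R)⁻¹ * (P * A)).PosSemidef := by
  obtain ⟨M, hM, hMM⟩ : ∃ M : Matrix (Fin n) (Fin n) ℝ, M.PosSemidef ∧ M * M = P := by
    open scoped MatrixOrder in
    exact ⟨CFC.sqrt P, (CFC.sqrt_nonneg P).posSemidef, CFC.sqrt_mul_sqrt_self P hP.nonneg⟩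
  have hMT : Mᵀ = M := by
    have := hM.isHermitian
    simpa [Matrix.IsHermitian, Matrix.conjTranspose_eq_transpose_of_trivial] using this
  have hMRM : (M * R * M).PosSemidef := by
    have := hR.mul_mul_conjTranspose_same M
    simpa [hMT, Matrix.conjTranspose_eq_transpose_of_trivial] using this
  have hposdef : (1 + M * R * M).PosDef := Matrix.PosDef.add_posSemidef Matrix.PosDef.one hMRM
  have hdet : IsUnit (1 + P * R) := by
    rw [Matrix.isUnit_iff_isUnit_det]
    have h1 : (1 + P * R).det = (1 + M * R * M).det := by
      rw [← hMM, Matrix.mul_assoc, Matrix.det_one_add_mul_comm]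
    exact h1 ▸ (Matrix.isUnit_iff_isUnit_det _).mp hposdef.isUnit
  refine ⟨hdet, fun A => ?_⟩
  have hinv : (1 + P * R)⁻¹ * P = M * (1 + M * R * M)⁻¹ * M := by
    have hmul : (1 + P * R) * (M * (1 + M * R * M)⁻¹ * M) = P := by
      have : (1 + P * R) * M = M * (1 + M * R * M) := by
        rw [← hMM]; noncomm_ring
      calc (1 + P * R) * (M * (1 + M * R * M)⁻¹ * M)
          = ((1 + P * R) * M) * ((1 + M * R * M)⁻¹ * M) := by noncomm_ring
        _ = M * ((1 + M * R * M) * (1 + M * R * M)⁻¹) * M := by rw [this]; noncomm_ring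
        _ = P := by rw [Matrix.mul_nonsing_inv _ ((Matrix.isUnit_iff_isUnit_det _).mp hposdef.isUnit)]; simp [hMM]
    calc (1 + P * R)⁻¹ * P = (1 + P * R)⁻¹ * ((1 + P * R) * (M * (1 + M * R * M)⁻¹ * M)) := by rw [hmul]
      _ = _ := by rw [← Matrix.mul_assoc, Matrix.nonsing_inv_mul _ ((Matrix.isUnit_iff_isUnit_det _).mp hdet), Matrix.one_mul]
  have hre : Aᵀ * (1 + P * R)⁻¹ * (P * A) = (M * A)ᵀ * (1 + M * R * M)⁻¹ * (M * A) := by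
    calc Aᵀ * (1 + P * R)⁻¹ * (P * A) = Aᵀ * ((1 + P * R)⁻¹ * P) * A := by noncomm_ring
      _ = Aᵀ * (M * (1 + M * R * M)⁻¹ * M) * A := by rw [hinv]
      _ = (M * A)ᵀ * (1 + M * R * M)⁻¹ * (M * A) := by rw [Matrix.transpose_mul, hMT]; noncomm_ring
  rw [hre]
  have := hposdef.inv.posSemidef.conjTranspose_mul_mul_same (M * A)
  simpa using this
end Aux

/-- Well-posedness and positive semidefiniteness of the backward Riccati recursion,
with `Q_t = H^{xx}_t − H^{xu}_t (H^{uu}_t)⁻¹ (H^{xu}_t)ᵀ`, `A_t = F_t − G_t (H^{uu}_t)⁻¹ (H^{xu}_t)ᵀ`,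
`R_t = G_t (H^{uu}_t)⁻¹ G_tᵀ`. -/
theorem riccati_recursion_wellposed (n m T : ℕ)
    (Hxx : ℕ → Matrix (Fin n) (Fin n) ℝ)
    (Huu : ℕ → Matrix (Fin m) (Fin m) ℝ)
    (Hxu : ℕ → Matrix (Fin n) (Fin m) ℝ)
    (F : ℕ → Matrix (Fin n) (Fin n) ℝ)
    (G : ℕ → Matrix (Fin n) (Fin m) ℝ)
    (P : ℕ → Matrix (Fin n) (Fin n) ℝ)
    (hQ : ∀ t < T, (Hxx t - Hxu t * (Huu t)⁻¹ * (Hxu t)ᵀ).PosSemidef)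
    (hU : ∀ t < T, (Huu t).PosDef)
    (hterm : (Hxx T).PosSemidef)
    (hPT : P T = Hxx T)
    (hrec : ∀ t < T, P t =
      (Hxx t - Hxu t * (Huu t)⁻¹ * (Hxu t)ᵀ)
      + (F t - G t * (Huu t)⁻¹ * (Hxu t)ᵀ)ᵀ
        * (1 + P (t + 1) * (G t * (Huu t)⁻¹ * (G t)ᵀ))⁻¹
        * (P (t + 1) * (F t - G t * (Huu t)⁻¹ * (Hxu t)ᵀ))) :
    (∀ t < T, IsUnit (1 + P (t + 1) * (G t * (Huu t)⁻¹ * (G t)ᵀ))) ∧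
    (∀ t ≤ T, (P t).PosSemidef) := by
  have hRpsd : ∀ t < T, (G t * (Huu t)⁻¹ * (G t)ᵀ).PosSemidef := by
    intro t ht
    have := ((hU t ht).inv.posSemidef).mul_mul_conjTranspose_same (G t)
    simpa using this
  have hpsd : ∀ k t, t + k = T → (P t).PosSemidef := by
    intro k
    induction k with
    | zero => intro t h; simp at h; rw [h, hPT]; exact hterm
    | succ k ih =>
      intro t h
      have ht : t < T := by omega
      have hP1 : (P (t + 1)).PosSemidef := ih (t + 1) (by omega)
      have step := riccati_step hP1 (hRpsd t ht)
      rw [hrec t ht]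
      exact (hQ t ht).add (step.2 _)
  constructor
  · intro t ht
    exact (riccati_step (hpsd (T - (t + 1)) (t + 1) (by omega)) (hRpsd t ht)).1
  · intro t ht
    exact hpsd (T - t) t (by omega)
end
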